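/- arXiv:1703.09624 — 2 statements merged into one kernel-verified Lean document; each statement's English description precedes it below -/
import Mathlib

section
/- Let n ≥ 1, let c > 0 and a ∈ ℝ, and set λ₀ = −a/2 + ic. For the binomial matrix M(λ₀) defined below, Cramer(M(λ₀)) = n·i·c (more generally, for arbitrary λ₀ ∈ ℂ one has Cramer(M(λ₀)) = (n/2)·(λ₀ − λ₀̄)). -/
/-- For a `2n × (2n+1)` complex matrix `Δ`, `cramerFn n Δ = det Δ₁ / det Δ₂`,
where `Δ₁` consists of columns `1,…,2n−1,2n+1` and `Δ₂` of columns `1,…,2n`. -/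
noncomputable def cramerFn (n : ℕ) (Δ : Matrix (Fin (2*n)) (Fin (2*n+1)) ℂ) : ℂ :=
  Matrix.det (Matrix.of fun i (j : Fin (2*n)) =>
      if (j : ℕ) + 1 = 2*n then Δ i (Fin.last (2*n)) else Δ i j.castSucc) /
  Matrix.det (Matrix.of fun i (j : Fin (2*n)) => Δ i j.castSucc)


/-- The binomial matrix `M(λ₀)` of size `2n × (2n+1)` (rows and columns here
0-indexed; row `2m−1` ↦ even index, row `2m` ↦ odd index, etc.):
for `1 ≤ m ≤ n`, `1 ≤ k ≤ n`,
`M_{2m−1,2k−1} = M_{2m−1,2k} = C(k−1,m−1)·λ₀^(k−m)`,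
`M_{2m,2k−1} = −C(k−1,m−1)·conj(λ₀)^(k−m)`, `M_{2m,2k} = C(k−1,m−1)·conj(λ₀)^(k−m)`,
and last column `M_{2m−1,2n+1} = C(n,m−1)·λ₀^(n+1−m)`,
`M_{2m,2n+1} = −C(n,m−1)·conj(λ₀)^(n+1−m)`. -/
noncomputable def binM (n : ℕ) (l : ℂ) : Matrix (Fin (2*n)) (Fin (2*n+1)) ℂ :=
  Matrix.of fun r c =>
    let m0 := (r : ℕ) / 2
    if (c : ℕ) = 2*n then
      if (r : ℕ) % 2 = 0 then (Nat.choose n m0 : ℂ) * l ^ (n - m0)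
      else -((Nat.choose n m0 : ℂ) * (starRingEnd ℂ l) ^ (n - m0))
    else
      let k0 := (c : ℕ) / 2
      if (r : ℕ) % 2 = 0 then (Nat.choose k0 m0 : ℂ) * l ^ (k0 - m0)
      else if (c : ℕ) % 2 = 0 then
        -((Nat.choose k0 m0 : ℂ) * (starRingEnd ℂ l) ^ (k0 - m0))
      else (Nat.choose k0 m0 : ℂ) * (starRingEnd ℂ l) ^ (k0 - m0)

/-!
Pair the rows and the columns as `(2k, 2k+1)`. The square part of `M(λ₀)` then factors as
`diag(A(λ₀), A(λ̄₀)) · (1 ⊗ [[1, 1], [-1, 1]])`, where `A(z)_{mk} = C(k,m) z^(k-m)` is the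
unitriangular matrix of the Taylor shift `p(X) ↦ p(X + z)`. So its determinant is `2ⁿ ≠ 0`, and
by Cramer's rule the quotient is the last unknown of the linear system. The system splits into
`A(z) u = (C(n,m) z^(n-m))ₘ` for `z = λ₀, λ̄₀`, which says `Σ_{k<n} uₖ Yᵏ ≡ Yⁿ` modulo
`(Y - z)ⁿ`; it is solved by the coefficients of `Yⁿ - (Y - z)ⁿ`, and the last unknown is
`(n λ₀ - n λ̄₀) / 2`.
-/

open Finset Matrix
open scoped Kronecker

theorem sum_range_choose_mul_choose_mul_pow {R : Type*} [CommSemiring R] (x y : R) (n m : ℕ) :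
    ∑ k ∈ range (n + 1), (n.choose k * k.choose m : R) * x ^ (k - m) * y ^ (n - k) =
      n.choose m * (x + y) ^ (n - m) := by
  rcases lt_or_ge n m with hnm | hmn
  · rw [Nat.choose_eq_zero_of_lt hnm, Nat.cast_zero, zero_mul]
    refine sum_eq_zero fun k hk => ?_
    rw [Nat.choose_eq_zero_of_lt (n := k) (by have := mem_range.mp hk; omega)]
    simp
  obtain ⟨d, rfl⟩ := Nat.exists_eq_add_of_le hmn
  rw [show m + d + 1 = m + (d + 1) by ring, sum_range_add, add_pow, mul_sum,
    sum_eq_zero fun k hk => by rw [Nat.choose_eq_zero_of_lt (mem_range.mp hk)]; simp, zero_add,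
    Nat.add_sub_cancel_left]
  refine sum_congr rfl fun j hj => ?_
  have hj : j ≤ d := Nat.lt_succ_iff.mp (mem_range.mp hj)
  have hchoose :
      ((m + d).choose (m + j) * (m + j).choose m : R) = (m + d).choose m * d.choose j := by
    have h := Nat.choose_mul (n := m + d) (Nat.le_add_right m j)
    rw [Nat.add_sub_cancel_left, Nat.add_sub_cancel_left] at h
    rw [← Nat.cast_mul, ← Nat.cast_mul, h]
  rw [hchoose, Nat.add_sub_cancel_left, Nat.add_sub_add_left]
  ring

section BinomialShift

variable {R : Type*} [CommRing R]

def binomialShift (n : ℕ) (z : R) : Matrix (Fin n) (Fin n) R :=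
  of fun m k => ((k : ℕ).choose m : R) * z ^ ((k : ℕ) - m)

/-- The coefficients of `Yᵏ`, `k < n`, in `Yⁿ - (Y - z)ⁿ`. -/
def powSubCoeffs (n : ℕ) (z : R) (k : Fin n) : R :=
  -((n.choose k : R) * (-z) ^ (n - (k : ℕ)))

theorem det_binomialShift (n : ℕ) (z : R) : (binomialShift n z).det = 1 := by
  rw [det_of_isUpperTriangular fun i j hij => by
    simp [binomialShift, Nat.choose_eq_zero_of_lt (show (j : ℕ) < i from hij)]]
  simp [binomialShift]

theorem binomialShift_mulVec_powSubCoeffs (n : ℕ) (z : R) :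
    binomialShift n z *ᵥ powSubCoeffs n z =
      fun m : Fin n => (n.choose m : R) * z ^ (n - (m : ℕ)) := by
  funext m
  have h := sum_range_choose_mul_choose_mul_pow z (-z) n m
  rw [add_neg_cancel, zero_pow (by omega), mul_zero, sum_range_succ] at h
  simp only [Nat.choose_self, Nat.cast_one, one_mul, Nat.sub_self, pow_zero, mul_one] at h
  simp only [mulVec, dotProduct, binomialShift, powSubCoeffs, of_apply]
  rw [Fin.sum_univ_eq_sum_range (fun k => ((k.choose m : ℕ) : R) * z ^ (k - m) *
    -((n.choose k : R) * (-z) ^ (n - k))) n, ← neg_eq_of_add_eq_zero_right h, ← sum_neg_distrib]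
  exact sum_congr rfl fun k _ => by ring

end BinomialShift

namespace Matrix

variable {ι o R : Type*} [Fintype ι] [Fintype o] [DecidableEq ι] [DecidableEq o] [CommRing R]

theorem det_updateCol_mulVec (A : Matrix ι ι R) (x : ι → R) (j : ι) :
    (A.updateCol j (A *ᵥ x)).det = A.det * x j := by
  rw [← cramer_apply, cramer_eq_adjugate_mulVec, mulVec_mulVec, adjugate_mul, smul_mulVec,
    one_mulVec, Pi.smul_apply, smul_eq_mul]

theorem blockDiagonal_mul_one_kronecker_apply (A : o → Matrix ι ι R) (B : Matrix o o R)
    (i j : ι × o) :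
    (blockDiagonal A * ((1 : Matrix ι ι R) ⊗ₖ B)) i j = A i.2 i.1 j.1 * B i.2 j.2 := by
  obtain ⟨i, r⟩ := i
  obtain ⟨j, s⟩ := j
  simp [mul_apply, Fintype.sum_prod_type, blockDiagonal_apply, kroneckerMap_apply, one_apply]

theorem blockDiagonal_mul_one_kronecker_mulVec (A : o → Matrix ι ι R) (B : Matrix o o R)
    (x : ι × o → R) (i : ι) (r : o) :
    ((blockDiagonal A * ((1 : Matrix ι ι R) ⊗ₖ B)) *ᵥ x) (i, r) =
      (A r *ᵥ fun k => ∑ s, B r s * x (k, s)) i := by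
  simp only [mulVec, dotProduct, Fintype.sum_prod_type, blockDiagonal_mul_one_kronecker_apply,
    mul_sum, mul_assoc]

theorem det_blockDiagonal_mul_one_kronecker (A : o → Matrix ι ι R) (B : Matrix o o R) :
    (blockDiagonal A * ((1 : Matrix ι ι R) ⊗ₖ B)).det =
      (∏ r, (A r).det) * B.det ^ Fintype.card ι := by
  rw [det_mul, det_blockDiagonal, det_kronecker, det_one, one_pow, one_mul]

end Matrix

def finPairEquiv (n : ℕ) : Fin n × Fin 2 ≃ Fin (2 * n) :=
  finProdFinEquiv.trans (finCongr (Nat.mul_comm n 2))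

@[simp]
theorem finPairEquiv_val (n : ℕ) (p : Fin n × Fin 2) :
    (finPairEquiv n p : ℕ) = p.2 + 2 * p.1 := rfl

theorem cramerFn_eq_det_updateCol_div_det (n : ℕ)
    (Δ : Matrix (Fin (2 * n)) (Fin (2 * n + 1)) ℂ) (j : Fin (2 * n))
    (hj : (j : ℕ) + 1 = 2 * n) :
    cramerFn n Δ = ((Δ.submatrix id Fin.castSucc).updateCol j fun i => Δ i (Fin.last _)).det /
      (Δ.submatrix id Fin.castSucc).det := by
  have hcol : ∀ k : Fin (2 * n), (k : ℕ) + 1 = 2 * n ↔ k = j := fun k => by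
    rw [Fin.ext_iff]; omega
  unfold cramerFn
  congr 2
  ext i k
  simp [updateCol_apply, hcol]

def signPattern : Matrix (Fin 2) (Fin 2) ℂ := !![1, 1; -1, 1]

theorem binM_apply_castSucc (n : ℕ) (l : ℂ) (m k : Fin n) (r s : Fin 2) :
    binM n l (finPairEquiv n (m, r)) (finPairEquiv n (k, s)).castSucc =
      binomialShift n (![l, starRingEnd ℂ l] r) m k * signPattern r s := by
  have hk : ((s : ℕ) + 2 * k) / 2 = k := by omega
  have hm : ((r : ℕ) + 2 * m) / 2 = m := by omega
  have hs : ((s : ℕ) + 2 * k) % 2 = s := by omega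
  have hr : ((r : ℕ) + 2 * m) % 2 = r := by omega
  have hlast : (s : ℕ) + 2 * k ≠ 2 * n := by omega
  simp only [binM, of_apply, Fin.val_castSucc, finPairEquiv_val, hk, hm, hs, hr, hlast, if_false]
  fin_cases r <;> fin_cases s <;> simp [binomialShift, signPattern]

theorem binM_apply_last (n : ℕ) (l : ℂ) (m : Fin n) (r : Fin 2) :
    binM n l (finPairEquiv n (m, r)) (Fin.last _) =
      signPattern r 0 * ((n.choose m : ℂ) * ![l, starRingEnd ℂ l] r ^ (n - (m : ℕ))) := by
  have hm : ((r : ℕ) + 2 * m) / 2 = m := by omega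
  have hr : ((r : ℕ) + 2 * m) % 2 = r := by omega
  simp only [binM, of_apply, Fin.val_last, finPairEquiv_val, hm, hr, if_true]
  fin_cases r <;> simp [signPattern]

theorem binM_submatrix_finPairEquiv (n : ℕ) (l : ℂ) :
    ((binM n l).submatrix id Fin.castSucc).submatrix (finPairEquiv n) (finPairEquiv n) =
      blockDiagonal (fun r => binomialShift n (![l, starRingEnd ℂ l] r)) *
        ((1 : Matrix (Fin n) (Fin n) ℂ) ⊗ₖ signPattern) := by
  ext ⟨m, r⟩ ⟨k, s⟩
  rw [blockDiagonal_mul_one_kronecker_apply]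
  exact binM_apply_castSucc n l m k r s

noncomputable def binMSolution (n : ℕ) (l : ℂ) (p : Fin n × Fin 2) : ℂ :=
  (powSubCoeffs n l p.1 + ![1, -1] p.2 * powSubCoeffs n (starRingEnd ℂ l) p.1) / 2

theorem cramerFn_binM (n : ℕ) (hn : 1 ≤ n) (l : ℂ) :
    cramerFn n (binM n l) = ((n : ℂ) / 2) * (l - starRingEnd ℂ l) := by
  set e := finPairEquiv n
  set S := (binM n l).submatrix id Fin.castSucc
  set b : Fin (2 * n) → ℂ := fun i => binM n l i (Fin.last _)
  set p : Fin n × Fin 2 := (⟨n - 1, by omega⟩, 1)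
  have hdet : (S.submatrix e e).det = 2 ^ n := by
    rw [binM_submatrix_finPairEquiv, det_blockDiagonal_mul_one_kronecker]
    simp [det_binomialShift, signPattern, det_fin_two_of]
    norm_num
  have hsol : S.submatrix e e *ᵥ binMSolution n l = b ∘ e := by
    funext ⟨m, r⟩
    have hpair : (fun k => ∑ s, signPattern r s * binMSolution n l (k, s)) =
        signPattern r 0 • powSubCoeffs n (![l, starRingEnd ℂ l] r : ℂ) := by
      funext k
      fin_cases r <;> simp [Fin.sum_univ_two, signPattern, binMSolution] <;> ring
    rw [binM_submatrix_finPairEquiv, blockDiagonal_mul_one_kronecker_mulVec, hpair, mulVec_smul,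
      binomialShift_mulVec_powSubCoeffs]
    exact (binM_apply_last n l m r).symm
  have hcol : (S.submatrix e e).updateCol p (b ∘ e) = (S.updateCol (e p) b).submatrix e e := by
    simp [updateCol_submatrix_equiv, Function.comp_def]
  rw [cramerFn_eq_det_updateCol_div_det n _ (e p) (by simp [e, p]; omega),
    ← det_submatrix_equiv_self e, ← det_submatrix_equiv_self e S, ← hcol, ← hsol,
    det_updateCol_mulVec, mul_div_cancel_left₀ _ (hdet ▸ pow_ne_zero n two_ne_zero)]
  have hchoose : n.choose (n - 1) = n := by
    rw [Nat.choose_symm hn, Nat.choose_one_right]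
  simp [binMSolution, powSubCoeffs, p, hchoose, Nat.sub_sub_self hn]
  ring

theorem stmt6_general (n : ℕ) (hn : 1 ≤ n) (c a : ℝ) :
    cramerFn n (binM n (-(a : ℂ)/2 + Complex.I * c)) = (n : ℂ) * Complex.I * c ∧
    ∀ l : ℂ, cramerFn n (binM n l) = ((n : ℂ)/2) * (l - starRingEnd ℂ l) := by
  refine ⟨?_, cramerFn_binM n hn⟩
  rw [cramerFn_binM n hn, map_add, map_mul, map_div₀, map_neg, Complex.conj_ofReal,
    Complex.conj_ofReal, Complex.conj_I, map_ofNat]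
  ring

/-- For `λ₀ = −a/2 + ic`, `Cramer(M(λ₀)) = n·i·c`; more generally, for any
`λ₀ ∈ ℂ`, `Cramer(M(λ₀)) = (n/2)·(λ₀ − conj λ₀)`. -/
theorem stmt6 (n : ℕ) (hn : 1 ≤ n) (c a : ℝ) (hc : 0 < c) :
    cramerFn n (binM n (-(a : ℂ)/2 + Complex.I * c)) = (n : ℂ) * Complex.I * c ∧
    ∀ l : ℂ, cramerFn n (binM n l) = ((n : ℂ)/2) * (l - starRingEnd ℂ l) :=
  stmt6_general n hn c a
end

section
/- Let n ≥ 1, λ₀ ∈ ℂ, and let (c_k)_{k≥0} be any sequence of complex numbers with c₀ ≠ 0. For the convolved matrix D defined below, the 2n×2n submatrix D₂ (columns 1,…,2n) has nonzero determinant and Cramer(D) = (n/2)·(λ₀ − λ₀̄); in particular, if λ₀ = −a/2 + ic with a ∈ ℝ and c > 0, then Cramer(D) = n·i·c. -/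
/-- The convolved matrix `D` of size `2n × (2n+1)`:
for `1 ≤ m ≤ n`, `1 ≤ k ≤ n`,
`D_{2m−1,2k−1} = D_{2m−1,2k} = Σ_{j=0}^{m−1} C(k−1,j)·λ₀^(k−1−j)·c_{m−1−j}`,
`D_{2m,2k−1} = −Σ_{j=0}^{m−1} C(k−1,j)·conj(λ₀)^(k−1−j)·conj(c_{m−1−j})`,
`D_{2m,2k} = Σ_{j=0}^{m−1} C(k−1,j)·conj(λ₀)^(k−1−j)·conj(c_{m−1−j})`,
with last column
`D_{2m−1,2n+1} = Σ_{j=0}^{m−1} C(n,j)·λ₀^(n−j)·c_{m−1−j}`,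
`D_{2m,2n+1} = −Σ_{j=0}^{m−1} C(n,j)·conj(λ₀)^(n−j)·conj(c_{m−1−j})`. -/
noncomputable def convD (n : ℕ) (l : ℂ) (cs : ℕ → ℂ) :
    Matrix (Fin (2*n)) (Fin (2*n+1)) ℂ :=
  Matrix.of fun r c =>
    let m0 := (r : ℕ) / 2
    if (c : ℕ) = 2*n then
      if (r : ℕ) % 2 = 0 then
        ∑ j ∈ Finset.range (m0+1), (Nat.choose n j : ℂ) * l ^ (n - j) * cs (m0 - j)
      else
        -∑ j ∈ Finset.range (m0+1),
          (Nat.choose n j : ℂ) * (starRingEnd ℂ l) ^ (n - j) * starRingEnd ℂ (cs (m0 - j))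
    else
      let k0 := (c : ℕ) / 2
      if (r : ℕ) % 2 = 0 then
        ∑ j ∈ Finset.range (m0+1), (Nat.choose k0 j : ℂ) * l ^ (k0 - j) * cs (m0 - j)
      else if (c : ℕ) % 2 = 0 then
        -∑ j ∈ Finset.range (m0+1),
          (Nat.choose k0 j : ℂ) * (starRingEnd ℂ l) ^ (k0 - j) * starRingEnd ℂ (cs (m0 - j))
      else
        ∑ j ∈ Finset.range (m0+1),
          (Nat.choose k0 j : ℂ) * (starRingEnd ℂ l) ^ (k0 - j) * starRingEnd ℂ (cs (m0 - j))

open Finset Matrix ComplexConjugate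

theorem Matrix.det_updateCol_mulVec_s8 {n R : Type*} [Fintype n] [DecidableEq n] [CommRing R]
    (A : Matrix n n R) (x : n → R) (i : n) :
    (A.updateCol i (A *ᵥ x)).det = x i * A.det := by
  rw [← cramer_apply, cramer_eq_adjugate_mulVec, mulVec_mulVec, adjugate_mul, smul_mulVec,
    one_mulVec, Pi.smul_apply, smul_eq_mul, mul_comm]

theorem Matrix.det_fromBlocks_self_neg_self {n R : Type*} [Fintype n] [DecidableEq n]
    [CommRing R] (A B : Matrix n n R) :
    (fromBlocks A A (-B) B).det = A.det * (B + B).det := by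
  have : fromBlocks A A (-B) B = fromBlocks A 0 (-B) (B + B) * fromBlocks 1 1 0 1 := by
    simp only [fromBlocks_multiply]; congr 1 <;> simp
  rw [this, det_mul, det_fromBlocks_zero₁₂, det_fromBlocks_zero₂₁]
  simp

theorem Matrix.fromBlocks_self_neg_self_mulVec_half {l n K : Type*} [Fintype n] [Field K]
    [CharZero K] (A B : Matrix l n K) (u w : n → K) :
    fromBlocks A A (-B) B *ᵥ Sum.elim ((2⁻¹ : K) • (u + w)) ((2⁻¹ : K) • (u - w))
      = Sum.elim (A *ᵥ u) (-(B *ᵥ w)) := by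
  rw [fromBlocks_mulVec, Sum.elim_comp_inl, Sum.elim_comp_inr, ← mulVec_add, neg_mulVec,
    ← mulVec_neg, ← mulVec_add, ← mulVec_neg]
  congr 2 <;> module

open Polynomial in
theorem sum_choose_mul_pow_mul_choose_mul_pow {R : Type*} [CommRing R] (a b : R) (K j : ℕ) :
    ∑ i ∈ range (K + 1), (i.choose j : R) * a ^ (i - j) * ((K.choose i : R) * b ^ (K - i))
      = K.choose j * (a + b) ^ (K - j) := by
  have h := congrArg (coeff · j) (add_pow (X + C a) (C b) K)
  simp only [add_assoc, ← C_add, coeff_X_add_C_pow, finsetSum_coeff, ← C_pow, ← C_eq_natCast,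
    coeff_mul_C] at h
  rw [mul_comm, h]
  exact sum_congr rfl fun i _ => by ring

section TaylorShift

variable {R : Type*} [CommRing R] (n : ℕ)

def lowerToeplitz (g : ℕ → R) : Matrix (Fin n) (Fin n) R :=
  of fun m j => if j ≤ m then g (m - j) else 0

def taylorColumn (x : R) (K : ℕ) : Fin n → R := fun j => K.choose j * x ^ (K - j)

def taylorMatrix (x : R) : Matrix (Fin n) (Fin n) R := of fun j k => taylorColumn n x k j

def taylorColumnPreimage (x : R) : Fin n → R := fun k => -(n.choose k * (-x) ^ (n - k))

theorem det_lowerToeplitz (g : ℕ → R) : (lowerToeplitz n g).det = g 0 ^ n := by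
  rw [det_of_isLowerTriangular (lowerToeplitz n g) fun i j (h : i < j) => if_neg h.not_ge]
  simp [lowerToeplitz]

theorem det_taylorMatrix (x : R) : (taylorMatrix n x).det = 1 := by
  rw [det_of_isUpperTriangular fun i j (h : j < i) => by
    simp [taylorMatrix, taylorColumn, Nat.choose_eq_zero_of_lt (Fin.lt_def.1 h)]]
  simp [taylorMatrix, taylorColumn]

theorem mul_taylorMatrix_apply (M : Matrix (Fin n) (Fin n) R) (x : R) (m k : Fin n) :
    (M * taylorMatrix n x) m k = (M *ᵥ taylorColumn n x k) m := rfl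

theorem lowerToeplitz_mulVec_taylorColumn (g : ℕ → R) (x : R) (K : ℕ) (m : Fin n) :
    (lowerToeplitz n g *ᵥ taylorColumn n x K) m
      = ∑ j ∈ range (m + 1), (K.choose j : R) * x ^ (K - j) * g (m - j) := by
  simp only [mulVec, dotProduct, lowerToeplitz, taylorColumn, of_apply, ite_mul, zero_mul,
    Fin.le_iff_val_le_val]
  rw [Fin.sum_univ_eq_sum_range (fun j => if j ≤ m then g (m - j) *
    ((K.choose j : R) * x ^ (K - j)) else 0), ← sum_filter]
  have : (range n).filter (· ≤ (m : ℕ)) = range (m + 1) := by ext; simp; omega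
  rw [this]
  exact sum_congr rfl fun j _ => mul_comm _ _

theorem taylorMatrix_mulVec_taylorColumnPreimage (x : R) :
    taylorMatrix n x *ᵥ taylorColumnPreimage n x = taylorColumn n x n := by
  ext j
  have h := sum_choose_mul_pow_mul_choose_mul_pow x (-x) n j
  rw [sum_range_succ, add_neg_cancel, zero_pow (by omega), mul_zero, Nat.choose_self,
    Nat.sub_self, pow_zero, Nat.cast_one, mul_one, mul_one] at h
  simp only [mulVec, dotProduct, taylorMatrix, taylorColumn, taylorColumnPreimage, of_apply]
  rw [Fin.sum_univ_eq_sum_range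
    (fun k => (k.choose j : R) * x ^ (k - j) * -(n.choose k * (-x) ^ (n - k)))]
  simp only [mul_neg, sum_neg_distrib]
  linear_combination -h

end TaylorShift

def interleave (n : ℕ) : Fin n ⊕ Fin n ≃ Fin (2 * n) where
  toFun := Sum.elim (fun k => ⟨2 * k, by omega⟩) (fun k => ⟨2 * k + 1, by omega⟩)
  invFun j := if (j : ℕ) % 2 = 0 then .inl ⟨j / 2, by omega⟩ else .inr ⟨j / 2, by omega⟩
  left_inv := by rintro (k | k) <;> simp [Nat.mul_add_div]
  right_inv j := by dsimp only; split_ifs <;> ext <;> simp <;> omega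

@[simp] theorem interleave_inl_val (n : ℕ) (k : Fin n) :
    (interleave n (.inl k) : ℕ) = 2 * k := rfl

@[simp] theorem interleave_inr_val (n : ℕ) (k : Fin n) :
    (interleave n (.inr k) : ℕ) = 2 * k + 1 := rfl

section ConvolvedMatrix

variable (n : ℕ) (l : ℂ) (cs : ℕ → ℂ)

theorem convD_interleave_inl (m : Fin n) (c : Fin (2 * n + 1)) :
    convD n l cs (interleave n (.inl m)) c
      = (lowerToeplitz n cs *ᵥ taylorColumn n l (c / 2)) m := by
  rw [lowerToeplitz_mulVec_taylorColumn]
  simp only [convD, of_apply, interleave_inl_val, Nat.mul_mod_right,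
    Nat.mul_div_cancel_left _ two_pos]
  split_ifs with h <;> simp [h]

theorem convD_interleave_inr (m : Fin n) (c : Fin (2 * n + 1)) :
    convD n l cs (interleave n (.inr m)) c = (if (c : ℕ) % 2 = 0 then -1 else 1) *
      (lowerToeplitz n (conj ∘ cs) *ᵥ taylorColumn n (conj l) (c / 2)) m := by
  rw [lowerToeplitz_mulVec_taylorColumn]
  simp only [convD, of_apply, interleave_inr_val, Nat.mul_add_mod, Nat.mul_add_div two_pos]
  split_ifs with h h' <;> simp_all

theorem convD_castSucc_submatrix_interleave :
    (of fun i (j : Fin (2 * n)) => convD n l cs i j.castSucc).submatrix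
        (interleave n) (interleave n)
      = fromBlocks (lowerToeplitz n cs * taylorMatrix n l) (lowerToeplitz n cs * taylorMatrix n l)
          (-(lowerToeplitz n (conj ∘ cs) * taylorMatrix n (conj l)))
          (lowerToeplitz n (conj ∘ cs) * taylorMatrix n (conj l)) := by
  ext (m | m) (k | k) <;>
    simp [convD_interleave_inl, convD_interleave_inr, mul_taylorMatrix_apply, Nat.mul_add_div]

theorem convD_last_comp_interleave :
    (fun i => convD n l cs i (Fin.last (2 * n))) ∘ interleave n
      = Sum.elim (lowerToeplitz n cs *ᵥ taylorColumn n l n)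
          (-(lowerToeplitz n (conj ∘ cs) *ᵥ taylorColumn n (conj l) n)) := by
  ext (m | m) <;> simp [convD_interleave_inl, convD_interleave_inr]

noncomputable def convDSolution : Fin n ⊕ Fin n → ℂ :=
  Sum.elim ((2⁻¹ : ℂ) • (taylorColumnPreimage n l + taylorColumnPreimage n (conj l)))
    ((2⁻¹ : ℂ) • (taylorColumnPreimage n l - taylorColumnPreimage n (conj l)))

theorem convD_castSucc_mulVec_convDSolution :
    (of fun i (j : Fin (2 * n)) => convD n l cs i j.castSucc) *ᵥ
        (convDSolution n l ∘ (interleave n).symm)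
      = fun i => convD n l cs i (Fin.last (2 * n)) := by
  apply (interleave n).surjective.injective_comp_right
  dsimp only
  rw [← submatrix_mulVec_equiv, convD_castSucc_submatrix_interleave, convDSolution,
    fromBlocks_self_neg_self_mulVec_half, convD_last_comp_interleave, ← mulVec_mulVec,
    ← mulVec_mulVec, taylorMatrix_mulVec_taylorColumnPreimage,
    taylorMatrix_mulVec_taylorColumnPreimage]

theorem det_convD_castSucc :
    (of fun i (j : Fin (2 * n)) => convD n l cs i j.castSucc).det
      = 2 ^ n * (cs 0 * conj (cs 0)) ^ n := by
  rw [← det_submatrix_equiv_self (interleave n), convD_castSucc_submatrix_interleave,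
    det_fromBlocks_self_neg_self, ← two_smul ℂ, det_smul]
  simp [det_mul, det_lowerToeplitz, det_taylorMatrix]
  ring

theorem det_convD_castSucc_ne_zero (h0 : cs 0 ≠ 0) :
    (of fun i (j : Fin (2 * n)) => convD n l cs i j.castSucc).det ≠ 0 := by
  rw [det_convD_castSucc]
  simp [h0]

theorem cramerFn_convD (hn : 1 ≤ n) (h0 : cs 0 ≠ 0) :
    cramerFn n (convD n l cs) = n / 2 * (l - conj l) := by
  set i₀ := interleave n (.inr ⟨n - 1, by omega⟩)
  have hnum : (of fun i (j : Fin (2 * n)) =>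
      if (j : ℕ) + 1 = 2 * n then convD n l cs i (Fin.last (2 * n)) else convD n l cs i j.castSucc)
      = (of fun i (j : Fin (2 * n)) => convD n l cs i j.castSucc).updateCol i₀
          (fun i => convD n l cs i (Fin.last (2 * n))) := by
    ext i j
    simp only [updateCol_apply, of_apply, i₀, Fin.ext_iff, interleave_inr_val,
      show (j : ℕ) + 1 = 2 * n ↔ (j : ℕ) = 2 * (n - 1) + 1 by omega]
  rw [cramerFn, hnum, ← convD_castSucc_mulVec_convDSolution, det_updateCol_mulVec_s8,
    mul_div_cancel_right₀ _ (det_convD_castSucc_ne_zero n l cs h0)]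
  simp only [i₀, convDSolution, Function.comp_apply, Equiv.symm_apply_apply, Sum.elim_inr,
    Pi.smul_apply, Pi.sub_apply, taylorColumnPreimage, Nat.choose_symm hn, Nat.choose_one_right,
    Nat.sub_sub_self hn, smul_eq_mul]
  ring

end ConvolvedMatrix

/-- If `c₀ ≠ 0`, the submatrix `D₂` (first `2n` columns of `D`) has nonzero
determinant and `Cramer(D) = (n/2)·(λ₀ − conj λ₀)`; in particular, for
`λ₀ = −a/2 + ic` with `c > 0`, `Cramer(D) = n·i·c`. -/
theorem stmt8 (n : ℕ) (hn : 1 ≤ n) (l : ℂ) (cs : ℕ → ℂ) (h0 : cs 0 ≠ 0) :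
    Matrix.det (Matrix.of fun i (j : Fin (2*n)) => convD n l cs i j.castSucc) ≠ 0 ∧
    cramerFn n (convD n l cs) = ((n : ℂ)/2) * (l - starRingEnd ℂ l) ∧
    ∀ (a c : ℝ), 0 < c → l = -(a : ℂ)/2 + Complex.I * c →
      cramerFn n (convD n l cs) = (n : ℂ) * Complex.I * c := by
  refine ⟨det_convD_castSucc_ne_zero n l cs h0, cramerFn_convD n l cs hn h0, fun a c _ hl => ?_⟩
  rw [cramerFn_convD n l cs hn h0, hl]
  simp only [map_add, map_div₀, map_neg, map_mul, Complex.conj_ofReal, Complex.conj_I, map_ofNat]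
  ring
end
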